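/- arXiv:math/0405094 — 3 statements merged into one kernel-verified Lean document; each statement's English description precedes it below -/
import Mathlib

section
/- Let p₂(x,y) and q₂(x,y) be binary quadratic forms over ℝ, K(x,y) = Jacobian(p₂, q₂) and μ = Discriminant(K). Then: deg gcd(p₂, q₂) = 0 iff μ ≠ 0; deg gcd(p₂, q₂) = 1 iff μ = 0 and K ≠ 0; deg gcd(p₂, q₂) = 2 iff K = 0 (provided (p₂, q₂) ≠ (0,0)). -/
/-!
Encode a binary quadratic form by its coefficient vector `v ∈ R³`. The Jacobian of the forms
with coefficient vectors `v, w` is again a quadratic form, with coefficients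
`2 (v × w)₂, -4 (v × w)₁, 2 (v × w)₀`. Hence `K = 0` iff `v × w = 0` iff the forms are
proportional, and `μ = 16 ((v × w)₁² - (v × w)₀ (v × w)₂)` is sixteen times the resultant of
the two forms. A linear form `u x + v y` divides a quadratic form iff the latter vanishes at
`(v, -u)`, and over an algebraically closed field two binary quadratic forms have a common
nontrivial zero iff their resultant vanishes: if `p = a (x - r y)(x - r' y)`, the resultant is
`a² q(r, 1) q(r', 1)`.
-/

open MvPolynomial Matrix

/-- `v` lists the coefficients of `x²`, `xy`, `y²`; the middle one is not halved. -/
noncomputable def quadForm {R : Type*} [CommSemiring R] (v : Fin 3 → R) :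
    MvPolynomial (Fin 2) R :=
  C (v 0) * X 0 ^ 2 + C (v 1) * (X 0 * X 1) + C (v 2) * X 1 ^ 2

section CommSemiring
variable {R : Type*} [CommSemiring R] (v : Fin 3 → R)

lemma isHomogeneous_quadForm : (quadForm v).IsHomogeneous 2 :=
  ((isHomogeneous_C_mul_X_pow _ _ _).add
    (((isHomogeneous_X R 0).mul (isHomogeneous_X R 1)).C_mul _)).add
    (isHomogeneous_C_mul_X_pow _ _ _)

lemma X_zero_mul_X_one :
    (X 0 * X 1 : MvPolynomial (Fin 2) R) =
      monomial (Finsupp.single 0 1 + Finsupp.single 1 1) 1 := by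
  rw [X, X, monomial_mul, mul_one]

@[simp]
lemma coeff_quadForm_x_sq : coeff (Finsupp.single 0 2) (quadForm v) = v 0 := by
  simp [quadForm, X_zero_mul_X_one, X_pow_eq_monomial, coeff_monomial, Finsupp.ext_iff,
    Fin.forall_fin_two]

lemma coeff_quadForm_xy : coeff (Finsupp.single 0 1 + Finsupp.single 1 1) (quadForm v) = v 1 := by
  simp [quadForm, X_zero_mul_X_one, X_pow_eq_monomial, coeff_monomial, Finsupp.ext_iff,
    Fin.forall_fin_two]

@[simp]
lemma coeff_quadForm_y_sq : coeff (Finsupp.single 1 2) (quadForm v) = v 2 := by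
  simp [quadForm, X_zero_mul_X_one, X_pow_eq_monomial, coeff_monomial, Finsupp.ext_iff,
    Fin.forall_fin_two]

lemma quadForm_injective :
    Function.Injective (quadForm : (Fin 3 → R) → MvPolynomial (Fin 2) R) := by
  intro v w h
  have h0 := congrArg (coeff (Finsupp.single 0 2)) h
  have h1 := congrArg (coeff (Finsupp.single 0 1 + Finsupp.single 1 1)) h
  have h2 := congrArg (coeff (Finsupp.single 1 2)) h
  simp only [coeff_quadForm_x_sq, coeff_quadForm_xy, coeff_quadForm_y_sq] at h0 h1 h2
  ext i; fin_cases i <;> assumption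

lemma MvPolynomial.IsHomogeneous.eq_quadForm {p : MvPolynomial (Fin 2) R}
    (hp : p.IsHomogeneous 2) :
    p = quadForm ![coeff (Finsupp.single 0 2) p,
      coeff (Finsupp.single 0 1 + Finsupp.single 1 1) p, coeff (Finsupp.single 1 2) p] := by
  ext m
  by_cases hm : m.degree = 2
  · rw [Finsupp.degree_eq_sum, Fin.sum_univ_two] at hm
    have hm' : m = Finsupp.single 0 (m 0) + Finsupp.single 1 (m 1) := by
      ext i; fin_cases i <;> simp
    obtain h | h | h : m 0 = 2 ∧ m 1 = 0 ∨ m 0 = 1 ∧ m 1 = 1 ∨ m 0 = 0 ∧ m 1 = 2 := by omega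
    all_goals rw [hm', h.1, h.2]; simp [coeff_quadForm_xy]
  · rw [hp.coeff_eq_zero hm, (isHomogeneous_quadForm _).coeff_eq_zero hm]

lemma C_mul_quadForm (c : R) : C c * quadForm v = quadForm (c • v) := by
  simp only [quadForm, Pi.smul_apply, smul_eq_mul, C_mul]
  ring

lemma map_quadForm {S : Type*} [CommSemiring S] (f : R →+* S) :
    map f (quadForm v) = quadForm (f ∘ v) := by
  simp [quadForm]

lemma quadForm_eq_linForm_mul_linForm {a b c d : R} (h0 : v 0 = a * c)
    (h1 : v 1 = a * d + b * c) (h2 : v 2 = b * d) :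
    quadForm v = (C a * X 0 + C b * X 1) * (C c * X 0 + C d * X 1) := by
  simp only [quadForm, h0, h1, h2, C_mul, C_add]
  ring

@[simp]
lemma eval_quadForm (s t : R) :
    eval ![s, t] (quadForm v) = v 0 * s ^ 2 + v 1 * (s * t) + v 2 * t ^ 2 := by
  simp [quadForm]

end CommSemiring

section CommRing
variable {R : Type*} [CommRing R]

lemma quadForm_eq_zero_iff (v : Fin 3 → R) : quadForm v = 0 ↔ v = 0 := by
  rw [← quadForm_injective.eq_iff, show quadForm (0 : Fin 3 → R) = 0 by simp [quadForm]]

lemma pderiv_zero_quadForm (v : Fin 3 → R) :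
    pderiv 0 (quadForm v) = C (2 * v 0) * X 0 + C (v 1) * X 1 := by
  simp [quadForm, pderiv_X, C_mul, map_ofNat, mul_assoc, mul_comm, mul_left_comm]

lemma pderiv_one_quadForm (v : Fin 3 → R) :
    pderiv 1 (quadForm v) = C (v 1) * X 0 + C (2 * v 2) * X 1 := by
  simp [quadForm, pderiv_X, C_mul, map_ofNat, mul_assoc, mul_comm, mul_left_comm]

lemma jacobian_quadForm (v w : Fin 3 → R) :
    pderiv 0 (quadForm v) * pderiv 1 (quadForm w) - pderiv 1 (quadForm v) * pderiv 0 (quadForm w) =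
      quadForm ![2 * (v ⨯₃ w) 2, -4 * (v ⨯₃ w) 1, 2 * (v ⨯₃ w) 0] := by
  rw [pderiv_zero_quadForm, pderiv_one_quadForm, pderiv_zero_quadForm, pderiv_one_quadForm]
  simp only [quadForm, cross_apply, cons_val_zero, cons_val_one, cons_val_two, head_cons,
    tail_cons, C_mul, C_sub, C_neg, map_ofNat]
  ring

lemma jacobian_quadForm_eq_zero_iff [NoZeroDivisors R] [NeZero (2 : R)] (v w : Fin 3 → R) :
    pderiv 0 (quadForm v) * pderiv 1 (quadForm w) - pderiv 1 (quadForm v) * pderiv 0 (quadForm w) =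
      0 ↔ v ⨯₃ w = 0 := by
  have h4 : (-4 : R) = -(2 * 2) := by norm_num
  rw [jacobian_quadForm, quadForm_eq_zero_iff]
  simp only [funext_iff, Fin.forall_fin_succ, Pi.zero_apply, cons_val_zero, cons_val_succ,
    cons_val_fin_one, Fin.succ_zero_eq_one, Fin.succ_one_eq_two, IsEmpty.forall_iff, h4, neg_mul,
    neg_eq_zero, mul_eq_zero, two_ne_zero, false_or, or_self, forall_const, and_true]
  tauto

lemma cross_comp {S : Type*} [CommRing S] (f : R →+* S) (v w : Fin 3 → R) :
    (f ∘ v) ⨯₃ (f ∘ w) = f ∘ (v ⨯₃ w) := by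
  ext i; fin_cases i <;> simp [cross_apply]

/-- The resultant of `quadForm v` and `quadForm w`, in Bézout form. -/
def quadRes (v w : Fin 3 → R) : R := (v ⨯₃ w) 1 ^ 2 - (v ⨯₃ w) 0 * (v ⨯₃ w) 2

lemma quadRes_comm (v w : Fin 3 → R) : quadRes v w = quadRes w v := by
  simp only [quadRes, cross_apply, cons_val_zero, cons_val_one, cons_val_two, head_cons,
    tail_cons]
  ring

lemma quadRes_comp {S : Type*} [CommRing S] (f : R →+* S) (v w : Fin 3 → R) :
    quadRes (f ∘ v) (f ∘ w) = f (quadRes v w) := by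
  simp [quadRes, cross_comp]

lemma quadRes_eq_zero_of_eval_eq_zero [IsDomain R] {v w : Fin 3 → R} {s t : R}
    (hst : (s, t) ≠ (0, 0)) (hv : eval ![s, t] (quadForm v) = 0)
    (hw : eval ![s, t] (quadForm w) = 0) : quadRes v w = 0 := by
  simp only [eval_quadForm] at hv hw
  simp only [quadRes, cross_apply, cons_val_zero, cons_val_one, cons_val_two, head_cons,
    tail_cons]
  by_cases ht : t = 0
  · have hs : s ≠ 0 := by rintro rfl; exact hst (by rw [ht])
    subst ht
    have hv0 : v 0 = 0 := by simpa [hs] using hv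
    have hw0 : w 0 = 0 := by simpa [hs] using hw
    rw [hv0, hw0]
    ring
  · have key : ((v 2 * w 0 - v 0 * w 2) ^ 2 - (v 1 * w 2 - v 2 * w 1) * (v 0 * w 1 - v 1 * w 0)) *
        t ^ 4 = 0 := by
      linear_combination
        (((v 0 * w 2 - v 2 * w 0) * t ^ 2 - (v 0 * w 1 - v 1 * w 0) * (s * t)) * v 0
          - (v 0 * w 1 - v 1 * w 0) * t ^ 2 * v 1) * hw
        + ((v 0 * w 1 - v 1 * w 0) * t ^ 2 * w 1
          - ((v 0 * w 2 - v 2 * w 0) * t ^ 2 - (v 0 * w 1 - v 1 * w 0) * (s * t)) * w 0) * hv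
    exact (mul_eq_zero.mp key).resolve_right (pow_ne_zero 4 ht)

end CommRing

section Field
variable {K : Type*} [Field K]

lemma linForm_dvd_quadForm_iff {a b : K} (hab : (a, b) ≠ (0, 0)) (v : Fin 3 → K) :
    C a * X 0 + C b * X 1 ∣ quadForm v ↔ eval ![b, -a] (quadForm v) = 0 := by
  constructor
  · rintro ⟨q, hq⟩
    simp [hq, mul_comm]
  intro hv
  rw [eval_quadForm] at hv
  by_cases ha : a = 0
  · have hb : b ≠ 0 := by rintro rfl; exact hab (by rw [ha])
    subst ha
    have hv0 : v 0 = 0 := by simpa [hb] using hv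
    exact ⟨_, quadForm_eq_linForm_mul_linForm v (c := v 1 / b) (d := v 2 / b)
      (by rw [hv0, zero_mul]) (by field_simp; ring) (by field_simp)⟩
  · exact ⟨_, quadForm_eq_linForm_mul_linForm v (c := v 0 / a) (d := (v 1 * a - b * v 0) / a ^ 2)
      (by field_simp) (by field_simp; ring) (by field_simp; linear_combination hv)⟩

lemma exists_linForm_dvd_iff_exists_eval_eq_zero (v w : Fin 3 → K) :
    (∃ a b : K, (a, b) ≠ (0, 0) ∧
        C a * X 0 + C b * X 1 ∣ quadForm v ∧ C a * X 0 + C b * X 1 ∣ quadForm w) ↔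
      ∃ s t : K, (s, t) ≠ (0, 0) ∧
        eval ![s, t] (quadForm v) = 0 ∧ eval ![s, t] (quadForm w) = 0 := by
  constructor
  · rintro ⟨a, b, hab, hv, hw⟩
    refine ⟨b, -a, ?_, (linForm_dvd_quadForm_iff hab v).1 hv,
      (linForm_dvd_quadForm_iff hab w).1 hw⟩
    simpa [and_comm] using hab
  · rintro ⟨s, t, hst, hv, hw⟩
    have hts : (-t, s) ≠ (0, 0) := by simpa [and_comm] using hst
    refine ⟨-t, s, hts, ?_, ?_⟩ <;> rw [linForm_dvd_quadForm_iff hts, neg_neg] <;> assumption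

lemma exists_smul_eq_or_eq_smul_iff_cross_eq_zero {v w : Fin 3 → K} :
    (∃ c : K, w = c • v ∨ v = c • w) ↔ v ⨯₃ w = 0 := by
  rw [← not_ne_iff, crossProduct_ne_zero_iff_linearIndependent]
  by_cases hv : v = 0
  · subst hv
    exact iff_of_true ⟨0, Or.inr (zero_smul K w).symm⟩ fun h ↦ h.ne_zero 0 rfl
  rw [LinearIndependent.pair_iff' hv]
  push Not
  constructor
  · rintro ⟨c, h | h⟩
    · exact ⟨c, h.symm⟩
    · have hc : c ≠ 0 := by rintro rfl; exact hv (by rw [h, zero_smul])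
      exact ⟨c⁻¹, by rw [h, smul_smul, inv_mul_cancel₀ hc, one_smul]⟩
  · rintro ⟨c, h⟩
    exact ⟨c, Or.inl h.symm⟩

lemma quadRes_of_roots {v : Fin 3 → K} {r r' : K} (h1 : v 1 = -(v 0 * (r + r')))
    (h2 : v 2 = v 0 * (r * r')) (w : Fin 3 → K) :
    quadRes v w = v 0 ^ 2 * eval ![r, 1] (quadForm w) * eval ![r', 1] (quadForm w) := by
  simp only [quadRes, cross_apply, eval_quadForm, cons_val_zero, cons_val_one, cons_val_two,
    head_cons, tail_cons, h1, h2]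
  ring

lemma exists_roots_of_coeff_ne_zero [IsAlgClosed K] {v : Fin 3 → K} (hv : v 0 ≠ 0) :
    ∃ r r' : K, v 1 = -(v 0 * (r + r')) ∧ v 2 = v 0 * (r * r') := by
  obtain ⟨r, hr⟩ := IsAlgClosed.exists_root
    (Polynomial.C (v 0) * Polynomial.X ^ 2 + Polynomial.C (v 1) * Polynomial.X +
      Polynomial.C (v 2))
    (by rw [Polynomial.degree_quadratic hv]; decide)
  simp only [Polynomial.IsRoot, Polynomial.eval_add, Polynomial.eval_mul, Polynomial.eval_C,
    Polynomial.eval_pow, Polynomial.eval_X] at hr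
  exact ⟨r, -v 1 / v 0 - r, by field_simp; ring, by field_simp; linear_combination hr⟩

lemma exists_eval_eq_zero_iff_quadRes_eq_zero [IsAlgClosed K] (v w : Fin 3 → K) :
    (∃ s t : K, (s, t) ≠ (0, 0) ∧
        eval ![s, t] (quadForm v) = 0 ∧ eval ![s, t] (quadForm w) = 0) ↔ quadRes v w = 0 := by
  refine ⟨fun ⟨s, t, hst, hv, hw⟩ ↦ quadRes_eq_zero_of_eval_eq_zero hst hv hw, fun h ↦ ?_⟩
  wlog hv : v 0 ≠ 0 generalizing v w
  · by_cases hw : w 0 = 0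
    · exact ⟨1, 0, by simp, by simp [not_not.mp hv], by simp [hw]⟩
    · obtain ⟨s, t, hst, h1, h2⟩ := this w v (quadRes_comm v w ▸ h) hw
      exact ⟨s, t, hst, h2, h1⟩
  obtain ⟨r, r', h1, h2⟩ := exists_roots_of_coeff_ne_zero hv
  rw [quadRes_of_roots h1 h2] at h
  have hr : eval ![r, 1] (quadForm v) = 0 := by rw [eval_quadForm, h1, h2]; ring
  have hr' : eval ![r', 1] (quadForm v) = 0 := by rw [eval_quadForm, h1, h2]; ring
  obtain (h | h) | h := mul_eq_zero.mp h |>.imp_left mul_eq_zero.mp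
  · exact absurd (pow_eq_zero_iff two_ne_zero |>.mp h) hv
  · exact ⟨r, 1, by simp, hr, h⟩
  · exact ⟨r', 1, by simp, hr', h⟩

end Field

theorem gcd_degree_quadratic_forms_general
    (p2 q2 : MvPolynomial (Fin 2) ℝ)
    (hp : p2.IsHomogeneous 2) (hq : q2.IsHomogeneous 2) :
    let K : MvPolynomial (Fin 2) ℝ :=
      pderiv 0 p2 * pderiv 1 q2 - pderiv 1 p2 * pderiv 0 q2
    let μ : ℝ :=
      (coeff (Finsupp.single (0 : Fin 2) 1 + Finsupp.single (1 : Fin 2) 1) K) ^ 2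
        - 4 * coeff (Finsupp.single (0 : Fin 2) 2) K * coeff (Finsupp.single (1 : Fin 2) 2) K
    let P : MvPolynomial (Fin 2) ℂ := map (algebraMap ℝ ℂ) p2
    let Q : MvPolynomial (Fin 2) ℂ := map (algebraMap ℝ ℂ) q2
    let CommonLin : Prop := ∃ u v : ℂ, (u, v) ≠ (0, 0) ∧
      (C u * X 0 + C v * X 1) ∣ P ∧ (C u * X 0 + C v * X 1) ∣ Q
    let Prop2 : Prop := ∃ c : ℂ, Q = C c * P ∨ P = C c * Q
    ((¬ CommonLin) ↔ μ ≠ 0) ∧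
    ((CommonLin ∧ ¬ Prop2) ↔ (μ = 0 ∧ K ≠ 0)) ∧
    (Prop2 ↔ K = 0) := by
  intro K μ P Q CommonLin Prop2
  obtain ⟨v, rfl⟩ : ∃ v, p2 = quadForm v := ⟨_, hp.eq_quadForm⟩
  obtain ⟨w, rfl⟩ : ∃ w, q2 = quadForm w := ⟨_, hq.eq_quadForm⟩
  have hμ : μ = 16 * quadRes v w := by
    simp only [μ, K, jacobian_quadForm, coeff_quadForm_x_sq, coeff_quadForm_xy,
      coeff_quadForm_y_sq, quadRes, cons_val_zero, cons_val_one, cons_val_two, head_cons,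
      tail_cons]
    ring
  have hP : P = quadForm (algebraMap ℝ ℂ ∘ v) := map_quadForm _ _
  have hQ : Q = quadForm (algebraMap ℝ ℂ ∘ w) := map_quadForm _ _
  have hCommonLin : CommonLin ↔ μ = 0 := by
    simp only [CommonLin, hP, hQ, hμ, exists_linForm_dvd_iff_exists_eval_eq_zero,
      exists_eval_eq_zero_iff_quadRes_eq_zero, quadRes_comp]
    simp
  have hProp2 : Prop2 ↔ K = 0 := by
    simp only [Prop2, K, hP, hQ, C_mul_quadForm, quadForm_injective.eq_iff,
      exists_smul_eq_or_eq_smul_iff_cross_eq_zero, cross_comp, jacobian_quadForm_eq_zero_iff]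
    simp [funext_iff]
  rw [hCommonLin, hProp2]
  tauto

/-- For real binary quadratic forms `p₂, q₂` (not both zero), with
`K = Jacobian(p₂, q₂)` and `μ = Discriminant(K)`: the degree of `gcd(p₂, q₂)` (over ℂ)
is `0` iff `μ ≠ 0`; `1` iff `μ = 0` and `K ≠ 0`; `2` iff `K = 0`. Here degree-2 gcd means
the forms are proportional, and degree ≥ 1 means a common linear factor over ℂ. -/
theorem gcd_degree_quadratic_forms
    (p2 q2 : MvPolynomial (Fin 2) ℝ)
    (hp : p2.IsHomogeneous 2) (hq : q2.IsHomogeneous 2)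
    (hne : ¬ (p2 = 0 ∧ q2 = 0)) :
    let K : MvPolynomial (Fin 2) ℝ :=
      pderiv 0 p2 * pderiv 1 q2 - pderiv 1 p2 * pderiv 0 q2
    let μ : ℝ :=
      (coeff (Finsupp.single (0 : Fin 2) 1 + Finsupp.single (1 : Fin 2) 1) K) ^ 2
        - 4 * coeff (Finsupp.single (0 : Fin 2) 2) K * coeff (Finsupp.single (1 : Fin 2) 2) K
    let P : MvPolynomial (Fin 2) ℂ := map (algebraMap ℝ ℂ) p2
    let Q : MvPolynomial (Fin 2) ℂ := map (algebraMap ℝ ℂ) q2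
    let CommonLin : Prop := ∃ u v : ℂ, (u, v) ≠ (0, 0) ∧
      (C u * X 0 + C v * X 1) ∣ P ∧ (C u * X 0 + C v * X 1) ∣ Q
    let Prop2 : Prop := ∃ c : ℂ, Q = C c * P ∨ P = C c * Q
    ((¬ CommonLin) ↔ μ ≠ 0) ∧
    ((CommonLin ∧ ¬ Prop2) ↔ (μ = 0 ∧ K ≠ 0)) ∧
    (Prop2 ↔ K = 0) :=
  gcd_degree_quadratic_forms_general p2 q2 hp hq
end

section
/- For the system ẋ = (x+1)(gx+1), ẏ = (g−1)xy + y² with g(g²−1) ≠ 0, the four affine lines y = 0, x + 1 = 0, x − y + 1 = 0, and gx + 1 = 0 are pairwise distinct invariant algebraic curves of the system. -/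
open MvPolynomial

/-! Each line `f` is invariant because `p ∂ₓf + q ∂ᵧf = k f` for an explicit linear cofactor `k`.
Two lines are not proportional because one of them vanishes at a point where the other does not;
for `gx + 1` that point has `x = -1/g`. -/

theorem MvPolynomial.ne_C_mul_of_eval_ne_zero_of_eval_eq_zero {σ R : Type*} [CommSemiring R]
    {f h : MvPolynomial σ R} (x : σ → R) (hf : eval x f ≠ 0) (hh : eval x h = 0) (c : R) :
    f ≠ C c * h := by
  rintro rfl
  simp [hh] at hf

/-- For `ẋ = (x+1)(gx+1), ẏ = (g−1)xy + y²` with `g(g²−1) ≠ 0`, the four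
affine lines `y = 0`, `x + 1 = 0`, `x − y + 1 = 0`, `gx + 1 = 0` are pairwise distinct
(non-proportional) invariant algebraic curves. -/
theorem four_invariant_lines_V1 (g : ℝ) (hg : g * (g ^ 2 - 1) ≠ 0) :
    let p : MvPolynomial (Fin 2) ℝ := (X 0 + 1) * (C g * X 0 + 1)
    let q : MvPolynomial (Fin 2) ℝ := C (g - 1) * X 0 * X 1 + X 1 ^ 2
    let f₁ : MvPolynomial (Fin 2) ℝ := X 1
    let f₂ : MvPolynomial (Fin 2) ℝ := X 0 + 1
    let f₃ : MvPolynomial (Fin 2) ℝ := X 0 - X 1 + 1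
    let f₄ : MvPolynomial (Fin 2) ℝ := C g * X 0 + 1
    (f₁ ∣ p * pderiv 0 f₁ + q * pderiv 1 f₁) ∧
    (f₂ ∣ p * pderiv 0 f₂ + q * pderiv 1 f₂) ∧
    (f₃ ∣ p * pderiv 0 f₃ + q * pderiv 1 f₃) ∧
    (f₄ ∣ p * pderiv 0 f₄ + q * pderiv 1 f₄) ∧
    (∀ c : ℝ, f₁ ≠ C c * f₂) ∧ (∀ c : ℝ, f₁ ≠ C c * f₃) ∧ (∀ c : ℝ, f₁ ≠ C c * f₄) ∧
    (∀ c : ℝ, f₂ ≠ C c * f₃) ∧ (∀ c : ℝ, f₂ ≠ C c * f₄) ∧ (∀ c : ℝ, f₃ ≠ C c * f₄) := by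
  intro p q f₁ f₂ f₃ f₄
  have hg0 : g ≠ 0 := left_ne_zero_of_mul hg
  have hg1 : g ≠ 1 := by rintro rfl; norm_num at hg
  have hf₄_root : g * (-1 / g) + 1 = 0 := by field_simp; ring
  have hf₂_at_root : -1 / g + 1 ≠ 0 := by
    rw [div_add_one hg0]; exact div_ne_zero (by contrapose! hg1; linarith) hg0
  refine ⟨Dvd.intro_left (C (g - 1) * X 0 + X 1) ?_, Dvd.intro_left (C g * X 0 + 1) ?_,
    Dvd.intro_left (C g * X 0 + X 1 + 1) ?_, Dvd.intro_left (C g * X 0 + C g) ?_,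
    ne_C_mul_of_eval_ne_zero_of_eval_eq_zero ![-1, 1] (by simp [f₁]) (by simp [f₂]),
    ne_C_mul_of_eval_ne_zero_of_eval_eq_zero ![0, 1] (by simp [f₁]) (by simp [f₃]),
    ne_C_mul_of_eval_ne_zero_of_eval_eq_zero ![-1 / g, 1] (by simp [f₁]) (by simpa [f₄]),
    ne_C_mul_of_eval_ne_zero_of_eval_eq_zero ![0, 1] (by simp [f₂]) (by simp [f₃]),
    ne_C_mul_of_eval_ne_zero_of_eval_eq_zero ![-1 / g, 0] (by simpa [f₂]) (by simpa [f₄]),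
    ne_C_mul_of_eval_ne_zero_of_eval_eq_zero ![-1 / g, 0] (by simpa [f₃]) (by simpa [f₄])⟩ <;>
  simp [p, q, f₁, f₂, f₃, f₄] <;> ring
end

section
/- For the system ẋ = g·x², ẏ = (g−1)xy + y² with g(g²−1) ≠ 0, the lines x = 0, y = 0, and y = x are invariant algebraic curves, and x = 0 is an invariant line of multiplicity at least two: the perturbed systems ẋ = (x + ε)(gx + ε), ẏ = (g−1)xy + y² have, for each ε ≠ 0, the two distinct invariant lines x = −ε and gx = −ε, both converging to x = 0 as ε → 0. -/
open MvPolynomial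

/-- For `ẋ = gx², ẏ = (g−1)xy + y²` with `g(g²−1) ≠ 0`, the lines `x = 0`,
`y = 0`, `y = x` are invariant, and `x = 0` has multiplicity at least two: the perturbed
systems `ẋ = (x+ε)(gx+ε), ẏ = (g−1)xy + y²` have, for each `ε ≠ 0`, the two distinct
invariant lines `x = −ε` and `gx = −ε`, whose roots `−ε` and `−ε/g` both converge to `0`
as `ε → 0`. -/
theorem double_line_V8 (g : ℝ) (hg : g * (g ^ 2 - 1) ≠ 0) :
    let p : MvPolynomial (Fin 2) ℝ := C g * X 0 ^ 2
    let q : MvPolynomial (Fin 2) ℝ := C (g - 1) * X 0 * X 1 + X 1 ^ 2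
    ((X 0 : MvPolynomial (Fin 2) ℝ) ∣ p * pderiv 0 (X 0) + q * pderiv 1 (X 0)) ∧
    ((X 1 : MvPolynomial (Fin 2) ℝ) ∣ p * pderiv 0 (X 1) + q * pderiv 1 (X 1)) ∧
    ((X 1 - X 0 : MvPolynomial (Fin 2) ℝ) ∣
        p * pderiv 0 (X 1 - X 0) + q * pderiv 1 (X 1 - X 0)) ∧
    (∀ ε : ℝ, ε ≠ 0 →
      let pε : MvPolynomial (Fin 2) ℝ := (X 0 + C ε) * (C g * X 0 + C ε)
      let L₁ : MvPolynomial (Fin 2) ℝ := X 0 + C ε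
      let L₂ : MvPolynomial (Fin 2) ℝ := C g * X 0 + C ε
      (L₁ ∣ pε * pderiv 0 L₁ + q * pderiv 1 L₁) ∧
      (L₂ ∣ pε * pderiv 0 L₂ + q * pderiv 1 L₂) ∧
      (∀ c : ℝ, L₁ ≠ C c * L₂)) ∧
    Filter.Tendsto (fun ε : ℝ => -ε) (nhds 0) (nhds 0) ∧
    Filter.Tendsto (fun ε : ℝ => -ε / g) (nhds 0) (nhds 0) := by
  have hg1 : g ≠ 1 := by rintro rfl; norm_num at hg
  intro p q
  refine ⟨⟨C g * X 0, by simp [p]; ring⟩,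
    ⟨C (g - 1) * X 0 + X 1, by simp [q]; ring⟩,
    ⟨X 1 + C g * X 0, by simp [p, q]; ring⟩, ?_, ?_, ?_⟩
  · intro ε hε pε L₁ L₂
    refine ⟨⟨C g * X 0 + C ε, by simp [pε, L₁, L₂]⟩,
      ⟨C g * (X 0 + C ε), by simp [pε, L₁, L₂]; ring⟩, ?_⟩
    intro c h
    have h0 := congrArg (eval fun _ => (0 : ℝ)) h
    have h1 := congrArg (eval fun _ => (1 : ℝ)) h
    simp [L₁, L₂] at h0 h1
    have hc : c = 1 := by
      field_simp [hε] at h0; linarith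
    subst hc
    exact hg1 (by linarith)
  · simpa using continuous_neg.tendsto (0 : ℝ)
  · simpa using (continuous_neg.div_const g).tendsto (0 : ℝ)
end
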